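/- Let m_h, m_f > 0, M0 = diag(m_h, m_h, m_f, m_f), and for q = (q1, q2, q3, q4) ∈ ℝ⁴ with q4 ≠ 0 let Z(q) be the Jacobian of z2(q) = (q1, q2, q1 − q4 cos q3, q2 − q4 sin q3) and M_ss(q) = Z(q)ᵀ M0 Z(q); let M_ds = diag(m_h, m_h). At a lift-off transition, given pre-transition double-support momenta p_old = M_ds (q̇1, q̇2)ᵀ, set ż1 = Z(q)⁻¹ (q̇1, q̇2, 0, 0)ᵀ (the lifted foot is stationary at lift-off) and p_new = M_ss(q) ż1. Then the kinetic energy is preserved across the transition: (1/2) p_newᵀ M_ss(q)⁻¹ p_new = (1/2) p_oldᵀ M_ds⁻¹ p_old. -/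

import Mathlib

/-!
Both energies are quadratic forms in velocities: for invertible `M` and `p = M v` one has
`pᵀ M⁻¹ p = (M v) ⬝ v`. On the single-support side `M_ss = Zᵀ M0 Z` and `Z ż1 = (q̇1, q̇2, 0, 0)`,
so the new energy is `(q̇1, q̇2, 0, 0)ᵀ M0 (q̇1, q̇2, 0, 0) = m_h (q̇1² + q̇2²)`: the foot carries no
kinetic energy. The only input from the model is that `Z(q)` is invertible, as `det Z(q) = -q4`.
-/

open Matrix

/-- The coordinates `z2(q) = (q1, q2, s1(q), s2(q))` of the V-SLIP model with feet and knees,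
where `s(q) = (q1 - q4 cos q3, q2 - q4 sin q3)` is the swing-foot position
(indices: `q 0 = q1, q 1 = q2, q 2 = q3, q 3 = q4`). -/
noncomputable def z2map (q : Fin 4 → ℝ) : Fin 4 → ℝ :=
  ![q 0, q 1, q 0 - q 3 * Real.cos (q 2), q 1 - q 3 * Real.sin (q 2)]

/-- The Jacobian `Z(q) = ∂z2/∂q`. -/
noncomputable def Zmat (q : Fin 4 → ℝ) : Matrix (Fin 4) (Fin 4) ℝ :=
  Matrix.of fun i j => fderiv ℝ (fun q' : Fin 4 → ℝ => z2map q' i) q (Pi.single j 1)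

/-- `M0 = diag(m_h, m_h, m_f, m_f)`. -/
noncomputable def M0mat (mh mf : ℝ) : Matrix (Fin 4) (Fin 4) ℝ :=
  Matrix.diagonal ![mh, mh, mf, mf]

/-- The single-support mass matrix `M_ss(q) = Z(q)ᵀ M0 Z(q)`. -/
noncomputable def Mss (mh mf : ℝ) (q : Fin 4 → ℝ) : Matrix (Fin 4) (Fin 4) ℝ :=
  (Zmat q)ᵀ * M0mat mh mf * Zmat q

/-- The double-support mass matrix `M_ds = diag(m_h, m_h)`. -/
noncomputable def Mds (mh : ℝ) : Matrix (Fin 2) (Fin 2) ℝ :=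
  Matrix.diagonal ![mh, mh]

namespace Matrix

theorem transpose_mul_mul_mulVec_dotProduct {n R : Type*} [Fintype n] [CommSemiring R]
    (A B : Matrix n n R) (v : n → R) :
    ((Aᵀ * B * A) *ᵥ v) ⬝ᵥ v = (B *ᵥ (A *ᵥ v)) ⬝ᵥ (A *ᵥ v) := by
  rw [Matrix.mul_assoc, ← mulVec_mulVec, mulVec_transpose, ← dotProduct_mulVec, ← mulVec_mulVec]

variable {n K : Type*} [Fintype n] [DecidableEq n] [Field K]

theorem nonsing_inv_mulVec_mulVec {M : Matrix n n K} (hM : IsUnit M.det) (v : n → K) :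
    M⁻¹ *ᵥ (M *ᵥ v) = v := by
  rw [mulVec_mulVec, nonsing_inv_mul _ hM, one_mulVec]

theorem mulVec_nonsing_inv_mulVec {M : Matrix n n K} (hM : IsUnit M.det) (v : n → K) :
    M *ᵥ (M⁻¹ *ᵥ v) = v := by
  rw [mulVec_mulVec, mul_nonsing_inv _ hM, one_mulVec]

theorem isUnit_det_transpose_mul_mul {A B : Matrix n n K} (hA : IsUnit A.det)
    (hB : IsUnit B.det) : IsUnit (Aᵀ * B * A).det := by
  rw [det_mul, det_mul, det_transpose]
  exact (hA.mul hB).mul hA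

theorem energy_transpose_mul_mul_nonsing_inv_mulVec {Z M0 : Matrix n n K} (hZ : IsUnit Z.det)
    (hM0 : IsUnit M0.det) (v : n → K) :
    ((Zᵀ * M0 * Z) *ᵥ (Z⁻¹ *ᵥ v)) ⬝ᵥ ((Zᵀ * M0 * Z)⁻¹ *ᵥ ((Zᵀ * M0 * Z) *ᵥ (Z⁻¹ *ᵥ v)))
      = (M0 *ᵥ v) ⬝ᵥ v := by
  rw [nonsing_inv_mulVec_mulVec (isUnit_det_transpose_mul_mul hZ hM0),
    transpose_mul_mul_mulVec_dotProduct, mulVec_nonsing_inv_mulVec hZ]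

end Matrix

theorem Zmat_eq (q : Fin 4 → ℝ) :
    Zmat q = !![1, 0, 0, 0;
      0, 1, 0, 0;
      1, 0, q 3 * Real.sin (q 2), -Real.cos (q 2);
      0, 1, -(q 3 * Real.cos (q 2)), -Real.sin (q 2)] := by
  have hproj (i : Fin 4) : fderiv ℝ (fun x : Fin 4 → ℝ => x i) q = ContinuousLinearMap.proj i :=
    (hasFDerivAt_apply i q).fderiv
  ext i j
  fin_cases i <;> fin_cases j <;>
    simp (disch := fun_prop) [Zmat, z2map, fderiv_fun_sub, fderiv_fun_mul, fderiv_cos, fderiv_sin,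
      hproj, Pi.single_apply]

theorem det_Zmat (q : Fin 4 → ℝ) : (Zmat q).det = -q 3 := by
  rw [Zmat_eq, det_succ_row_zero]
  simp [Fin.sum_univ_succ, det_succ_row_zero]
  linear_combination (-(q 3)) * Real.sin_sq_add_cos_sq (q 2)

/-- Energy preservation at the lift-off transition of the V-SLIP model with feet and knees:
with pre-transition double-support momenta `p_old = M_ds (q̇1, q̇2)ᵀ`,
`ż1 = Z(q)⁻¹ (q̇1, q̇2, 0, 0)ᵀ` (the lifted foot being stationary at lift-off) and
post-transition momenta `p_new = M_ss(q) ż1`, the kinetic energy is preserved: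
`(1/2) p_newᵀ M_ss(q)⁻¹ p_new = (1/2) p_oldᵀ M_ds⁻¹ p_old`. -/
theorem stmt16 (mh mf : ℝ) (hmh : 0 < mh) (hmf : 0 < mf)
    (q : Fin 4 → ℝ) (hq4 : q 3 ≠ 0) (qdot1 qdot2 : ℝ)
    (p_old : Fin 2 → ℝ) (hp_old : p_old = Mds mh *ᵥ ![qdot1, qdot2])
    (zdot1 : Fin 4 → ℝ) (hzdot1 : zdot1 = (Zmat q)⁻¹ *ᵥ ![qdot1, qdot2, 0, 0])
    (p_new : Fin 4 → ℝ) (hp_new : p_new = Mss mh mf q *ᵥ zdot1) :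
    (1 / 2) * (p_new ⬝ᵥ ((Mss mh mf q)⁻¹ *ᵥ p_new))
      = (1 / 2) * (p_old ⬝ᵥ ((Mds mh)⁻¹ *ᵥ p_old)) := by
  have hZ : IsUnit (Zmat q).det := by simpa [det_Zmat] using hq4
  have hM0 : IsUnit (M0mat mh mf).det := by
    simp [M0mat, Fin.prod_univ_four, hmh.ne', hmf.ne']
  have hMds : IsUnit (Mds mh).det := by simp [Mds, hmh.ne']
  subst hp_old hzdot1 hp_new
  rw [Mss, energy_transpose_mul_mul_nonsing_inv_mulVec hZ hM0, nonsing_inv_mulVec_mulVec hMds]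
  simp [M0mat, Mds, mulVec_diagonal, dotProduct, Fin.sum_univ_four, Fin.sum_univ_two]
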